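/- Let R_4(y) = ((y+2)/2)·ln y − ((y+4)/2)·ln(y + 4(1 − √((4+y)/(2(y−2))))) + ln(2y + 4(y+4)(1 − √((4+y)/(2(y−2))))). Then R_4 is strictly decreasing on [15, ∞); that is, for all real numbers y1, y2 with 15 ≤ y1 < y2, R_4(y2) < R_4(y1). -/

import Mathlib

/-- `R₄(y) = ((y+2)/2)·ln y − ((y+4)/2)·ln(y + 4(1 − √((4+y)/(2(y−2)))))
  + ln(2y + 4(y+4)(1 − √((4+y)/(2(y−2)))))`. -/
noncomputable def R4 (y : ℝ) : ℝ :=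
  (y + 2) / 2 * Real.log y -
    (y + 4) / 2 * Real.log (y + 4 * (1 - Real.sqrt ((4 + y) / (2 * (y - 2))))) +
    Real.log (2 * y + 4 * (y + 4) * (1 - Real.sqrt ((4 + y) / (2 * (y - 2)))))

/-!
Put `s = √((4+y)/(2(y-2)))`, so that `2(y-2)s² = 4+y`, and write `A = y + 4(1-s)`,
`B = 2y + 4(y+4)(1-s)` for the arguments of the last two logarithms. In the derivative of `R₄` the
logarithms only enter through `(log y - log A)/2 ≤ (y/A - 1)/2`; after this estimate, clearing
denominators and reducing modulo `2(y-2)s² = 4+y` bounds `R₄'(y)` by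
`4(y+2)(3y(5y-4)s - (11y²+28y-64)) / (y s (y-2)² A B)`. Squaring and eliminating `s²` once more, the
numerator is negative as soon as `(y-8)(17y⁴+344y³+336y²-2560y+2048) > 0`, i.e. for `y > 8`.
-/

open Real

noncomputable def R4Sqrt (y : ℝ) : ℝ := √((4 + y) / (2 * (y - 2)))

/-- With `s = R4Sqrt y`, the term `3 / (2 s (y-2)²)` is the derivative of `1 - R4Sqrt` at `y`. -/
noncomputable def R4Deriv (y : ℝ) : ℝ :=
  log y / 2 + (y + 2) / (2 * y) - log (y + 4 * (1 - R4Sqrt y)) / 2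
    - (y + 4) * (1 + 4 * (3 / (2 * R4Sqrt y * (y - 2) ^ 2))) / (2 * (y + 4 * (1 - R4Sqrt y)))
    + (2 + 4 * (1 - R4Sqrt y) + 4 * (y + 4) * (3 / (2 * R4Sqrt y * (y - 2) ^ 2)))
      / (2 * y + 4 * (y + 4) * (1 - R4Sqrt y))

section R4Sqrt

variable {y : ℝ}

lemma R4Sqrt_pos (hy : 2 < y) : 0 < R4Sqrt y := by
  have : 0 < y - 2 := by linarith
  exact sqrt_pos.2 (by positivity)

lemma two_mul_sub_two_mul_R4Sqrt_sq (hy : 2 < y) : 2 * (y - 2) * R4Sqrt y ^ 2 = 4 + y := by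
  have : 0 < y - 2 := by linarith
  rw [R4Sqrt, sq_sqrt (by positivity)]
  field_simp

lemma R4Sqrt_le_one (hy : 8 ≤ y) : R4Sqrt y ≤ 1 :=
  sqrt_le_one.2 <| (div_le_one (by linarith)).2 (by linarith)

lemma hasDerivAt_R4Sqrt (hy : 2 < y) :
    HasDerivAt R4Sqrt (-(3 / (2 * R4Sqrt y * (y - 2) ^ 2))) y := by
  have hy2 : y - 2 ≠ 0 := by linarith
  have hratio : HasDerivAt (fun x => (4 + x) / (2 * (x - 2))) (-3 / (y - 2) ^ 2) y :=
    (((hasDerivAt_id' y).const_add 4).div (((hasDerivAt_id' y).sub_const 2).const_mul 2)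
      (by simpa using hy2)).congr_deriv (by field_simp; ring)
  have hpos : 0 < (4 + y) / (2 * (y - 2)) := sqrt_pos.1 (R4Sqrt_pos hy)
  refine (hratio.sqrt hpos.ne').congr_deriv ?_
  rw [← R4Sqrt]
  field_simp

lemma mul_R4Sqrt_lt (hy : 8 < y) : 3 * y * (5 * y - 4) * R4Sqrt y < 11 * y ^ 2 + 28 * y - 64 := by
  have hrhs : 0 ≤ 11 * y ^ 2 + 28 * y - 64 := by nlinarith
  refine lt_of_pow_lt_pow_left₀ 2 hrhs ?_
  have hquartic : 0 < 17 * y ^ 4 + 344 * y ^ 3 + 336 * y ^ 2 - 2560 * y + 2048 := by nlinarith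
  have hsq := two_mul_sub_two_mul_R4Sqrt_sq (by linarith : 2 < y)
  have hdiff : 2 * (y - 2) * ((11 * y ^ 2 + 28 * y - 64) ^ 2 - (3 * y * (5 * y - 4) * R4Sqrt y) ^ 2)
      = (y - 8) * (17 * y ^ 4 + 344 * y ^ 3 + 336 * y ^ 2 - 2560 * y + 2048) := by
    linear_combination (-9) * y ^ 2 * (5 * y - 4) ^ 2 * hsq
  nlinarith [mul_pos (by linarith : 0 < y - 8) hquartic]

end R4Sqrt

lemma hasDerivAt_R4 {y : ℝ} (hy : 8 ≤ y) : HasDerivAt R4 (R4Deriv y) y := by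
  have hs := R4Sqrt_pos (by linarith : 2 < y)
  have hs1 := R4Sqrt_le_one hy
  have hA : y + 4 * (1 - R4Sqrt y) ≠ 0 := by nlinarith
  have hB : 2 * y + 4 * (y + 4) * (1 - R4Sqrt y) ≠ 0 := by nlinarith
  have hx := hasDerivAt_id' y
  have hu := (hasDerivAt_R4Sqrt (by linarith : 2 < y)).const_sub 1
  have hlogy := ((hx.add_const 2).div_const 2).mul (hasDerivAt_log (by linarith : y ≠ 0))
  have hlogA := ((hx.add_const 4).div_const 2).mul ((hx.add (hu.const_mul 4)).log hA)
  have hlogB := ((hx.const_mul 2).add (((hx.add_const 4).const_mul 4).mul hu)).log hB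
  unfold R4
  refine ((hlogy.sub hlogA).add hlogB).congr_deriv ?_
  simp only [Pi.add_apply, Pi.mul_apply, neg_neg, R4Deriv]
  field_simp
  ring

lemma R4Deriv_le {y : ℝ} (hy : 8 ≤ y) :
    R4Deriv y ≤ 4 * (y + 2) * (3 * y * (5 * y - 4) * R4Sqrt y - (11 * y ^ 2 + 28 * y - 64)) /
      (y * R4Sqrt y * (y - 2) ^ 2 * (y + 4 * (1 - R4Sqrt y)) *
        (2 * y + 4 * (y + 4) * (1 - R4Sqrt y))) := by
  have hy0 : 0 < y := by linarith
  have hy2 : y - 2 ≠ 0 := by linarith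
  have hs := R4Sqrt_pos (by linarith : 2 < y)
  have hs1 := R4Sqrt_le_one hy
  have hrel := two_mul_sub_two_mul_R4Sqrt_sq (by linarith : 2 < y)
  unfold R4Deriv
  generalize R4Sqrt y = s at *
  have hA : 0 < y + 4 * (1 - s) := by linarith
  have hB : y * 2 + 4 * (1 - s) * (y + 4) ≠ 0 := by nlinarith
  have hlog : log y - log (y + 4 * (1 - s)) ≤ y / (y + 4 * (1 - s)) - 1 := by
    rw [← log_div hy0.ne' hA.ne']
    exact log_le_sub_one_of_pos (div_pos hy0 hA)
  have hrational : (y / (y + 4 * (1 - s)) - 1) / 2 + (y + 2) / (2 * y)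
      - (y + 4) * (1 + 4 * (3 / (2 * s * (y - 2) ^ 2))) / (2 * (y + 4 * (1 - s)))
      + (2 + 4 * (1 - s) + 4 * (y + 4) * (3 / (2 * s * (y - 2) ^ 2)))
        / (2 * y + 4 * (y + 4) * (1 - s))
      = 4 * (y + 2) * (3 * y * (5 * y - 4) * s - (11 * y ^ 2 + 28 * y - 64)) /
        (y * s * (y - 2) ^ 2 * (y + 4 * (1 - s)) * (2 * y + 4 * (y + 4) * (1 - s))) := by
    field_simp
    linear_combination 64 * (y ^ 2 - 4) * (s - 2) * hrel
  linarith

lemma R4Deriv_neg {y : ℝ} (hy : 8 < y) : R4Deriv y < 0 := by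
  have hs := R4Sqrt_pos (by linarith : 2 < y)
  have hs1 := R4Sqrt_le_one hy.le
  have hB : 0 < 2 * y + 4 * (y + 4) * (1 - R4Sqrt y) := by nlinarith
  refine (R4Deriv_le hy.le).trans_lt (div_neg_of_neg_of_pos ?_ ?_)
  · exact mul_neg_of_pos_of_neg (by positivity) (by linarith [mul_R4Sqrt_lt hy])
  · have : 0 < y - 2 := by linarith
    have : 0 < y + 4 * (1 - R4Sqrt y) := by linarith
    positivity

lemma strictAntiOn_R4 : StrictAntiOn R4 (Set.Ici 8) := by
  refine strictAntiOn_of_hasDerivWithinAt_neg (convex_Ici 8)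
    (fun x hx => (hasDerivAt_R4 hx).continuousAt.continuousWithinAt)
    (fun x hx => (hasDerivAt_R4 (interior_subset hx)).hasDerivWithinAt) fun x hx => ?_
  rw [interior_Ici] at hx
  exact R4Deriv_neg hx

theorem R4_strictAnti (y1 y2 : ℝ) (h1 : 15 ≤ y1) (h12 : y1 < y2) : R4 y2 < R4 y1 :=
  strictAntiOn_R4 (Set.mem_Ici.2 (by linarith)) (Set.mem_Ici.2 (by linarith)) h12
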